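/- arXiv:1602.03077 — 8 statements merged into one kernel-verified Lean document; each statement's English description precedes it below -/
import Mathlib

section
/- Let K be a field and let N be a nonzero subspace of the space of n×n symmetric matrices over K such that every nonzero element of N has odd rank. If r is the maximum rank of elements of N and |K| ≥ r+1 (or K infinite), then dim N ≤ r(r+1)/2. -/
/-!
Take `S ∈ N` of maximal rank `r` and write `Kⁿ = U ⊕ ker S`. In a basis adapted to this
splitting, `S = [[G, 0], [0, 0]]` with `G` invertible of size `r`. For `T ∈ N`, every invertible
principal minor of the `ker S`-block of `T` would, by the Schur complement formula, make
`det (s • S + T)` restricted to `U ⊕ (that minor)` a nonzero multiple of a degree-`r` polynomial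
in `s`; since `|K| > r` some `s` then gives `rank (s • S + T) > r`. Looking at `1 × 1` and
`2 × 2` minors shows that the `ker S`-block of every `T ∈ N` vanishes. If moreover the `U`-block
of `T` vanishes, then `T = [[0, B], [Bᵀ, 0]]` has even rank `2 rank B`, so `T = 0`. Hence
`T ↦ T|_{U × U}` embeds `N` into the symmetric `r × r` matrices.
-/

open Matrix Cardinal

theorem LinearMap.finrank_range_prodMap {K V₁ V₂ W₁ W₂ : Type*} [Field K] [AddCommGroup V₁]
    [AddCommGroup V₂] [AddCommGroup W₁] [AddCommGroup W₂] [Module K V₁] [Module K V₂]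
    [Module K W₁] [Module K W₂] [FiniteDimensional K W₁] [FiniteDimensional K W₂]
    (f : V₁ →ₗ[K] W₁) (g : V₂ →ₗ[K] W₂) :
    Module.finrank K (f.prodMap g).range =
      Module.finrank K f.range + Module.finrank K g.range := by
  have h : f.prodMap g =
      (f.range.subtype.prodMap g.range.subtype) ∘ₗ (f.rangeRestrict.prodMap g.rangeRestrict) :=
    rfl
  rw [h, LinearMap.range_comp_of_range_eq_top, LinearMap.finrank_range_of_inj,
    Module.finrank_prod]
  · exact Prod.map_injective.mpr ⟨Subtype.val_injective, Subtype.val_injective⟩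
  · exact LinearMap.range_eq_top.mpr
      (Prod.map_surjective.mpr ⟨f.surjective_rangeRestrict, g.surjective_rangeRestrict⟩)

namespace Matrix

theorem IsSymm.apply_out {α m n : Type*} {A : Matrix n n α} (hA : A.IsSymm) (f : m → n)
    (i j : m) : A (f s(i, j).out.1) (f s(i, j).out.2) = A (f i) (f j) := by
  have hout : s(s(i, j).out.1, s(i, j).out.2) = s(i, j) := s(i, j).out_eq
  rcases (Sym2.mk_eq_mk_iff (p := s(i, j).out) (q := (i, j))).mp hout with h | h <;> rw [h]
  exact hA.apply (f i) (f j)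

variable {K : Type*} [Field K]

section Rank

variable {l m n o : Type*} [Fintype l] [Fintype m] [Fintype n] [Fintype o]

theorem rank_fromBlocks_diag (A : Matrix l m K) (D : Matrix n o K) :
    (fromBlocks A 0 0 D).rank = A.rank + D.rank := by
  have h : (fromBlocks A 0 0 D).mulVecLin =
      (LinearEquiv.sumArrowLequivProdArrow l n K K).symm.toLinearMap ∘ₗ
        (A.mulVecLin.prodMap D.mulVecLin) ∘ₗ
          (LinearEquiv.sumArrowLequivProdArrow m o K K).toLinearMap := by
    ext v (i | i) <;> simp [fromBlocks_mulVec] <;> rfl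
  rw [rank, h, LinearMap.range_comp, LinearMap.range_comp_of_range_eq_top _ (LinearEquiv.range _),
    LinearEquiv.finrank_map_eq, LinearMap.finrank_range_prodMap]
  rfl

theorem transpose_mul_transpose_mul_mul_mul_of_mul_eq_one [DecidableEq n] {P : Matrix n m K}
    {Q : Matrix m n K} (hPQ : P * Q = 1) (T : Matrix n n K) : Qᵀ * (Pᵀ * T * P) * Q = T := by
  rw [show Qᵀ * (Pᵀ * T * P) * Q = (P * Q)ᵀ * T * (P * Q) by
    simp only [Matrix.transpose_mul, Matrix.mul_assoc], hPQ]
  simp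

theorem rank_transpose_mul_mul_of_mul_eq_one [DecidableEq n] {P : Matrix n m K}
    {Q : Matrix m n K} (hPQ : P * Q = 1) (T : Matrix n n K) : (Pᵀ * T * P).rank = T.rank := by
  refine le_antisymm ((rank_mul_le_left _ _).trans (rank_mul_le_right _ _)) ?_
  conv_lhs => rw [← transpose_mul_transpose_mul_mul_mul_of_mul_eq_one hPQ T]
  exact (rank_mul_le_left _ _).trans (rank_mul_le_right _ _)

theorem isUnit_det_of_rank_eq_card [DecidableEq m] {A : Matrix m m K}
    (h : A.rank = Fintype.card m) : IsUnit A.det := by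
  rw [← isUnit_iff_isUnit_det, ← mulVec_surjective_iff_isUnit, ← coe_mulVecLin,
    ← LinearMap.range_eq_top]
  apply Submodule.eq_top_of_finrank_eq
  rwa [Module.finrank_fintype_fun_eq_card]

end Rank

theorem transpose_mul_mul_eq_fromBlocks_toBlocks₁₁ {n m ι : Type*} [Fintype n]
    {S : Matrix n n K} (hS : Sᵀ = S) {P : Matrix n (m ⊕ ι) K}
    (hSP : ∀ i j, (S * P) i (.inr j) = 0) :
    Pᵀ * S * P = fromBlocks (Pᵀ * S * P).toBlocks₁₁ 0 0 0 := by
  have hcol : ∀ x j, (Pᵀ * S * P) x (.inr j) = 0 := fun x j => by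
    simp [Matrix.mul_assoc, mul_apply (M := Pᵀ), hSP]
  have hsymm : (Pᵀ * S * P)ᵀ = Pᵀ * S * P := by
    simp [transpose_mul, hS, Matrix.mul_assoc]
  ext (i | i) (j | j)
  · rfl
  · exact hcol _ _
  · rw [← hsymm]; exact hcol _ _
  · exact hcol _ _

theorem exists_transpose_mul_mul_eq_fromBlocks {n : Type*} [Fintype n] [DecidableEq n]
    {S : Matrix n n K} (hS : Sᵀ = S) :
    ∃ (d : ℕ) (P : Matrix n (Fin S.rank ⊕ Fin d) K) (Q : Matrix (Fin S.rank ⊕ Fin d) n K)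
      (G : Matrix (Fin S.rank) (Fin S.rank) K),
      P * Q = 1 ∧ IsUnit G.det ∧ Pᵀ * S * P = fromBlocks G 0 0 0 := by
  set W := LinearMap.ker S.mulVecLin with hW
  obtain ⟨U, hWU⟩ := W.exists_isCompl
  have hU : Module.finrank K U = S.rank := by
    have h₁ := Submodule.finrank_add_eq_of_isCompl hWU
    have h₂ := LinearMap.finrank_range_add_finrank_ker S.mulVecLin
    rw [← hW, ← rank] at h₂
    omega
  let b : Module.Basis (Fin S.rank ⊕ Fin (Module.finrank K W)) K (n → K) :=
    ((Module.finBasisOfFinrankEq K U hU).prod (Module.finBasis K W)).map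
      (U.prodEquivOfIsCompl W hWU.symm)
  have hb : ∀ j, S *ᵥ b (.inr j) = 0 := by
    intro j
    have : b (.inr j) ∈ W := by simp [b]
    simpa [W] using this
  set P := (Pi.basisFun K n).toMatrix b
  have hPQ : P * b.toMatrix (Pi.basisFun K n) = 1 := Module.Basis.toMatrix_mul_toMatrix_flip _ _
  have hblocks := transpose_mul_mul_eq_fromBlocks_toBlocks₁₁ hS (P := P) fun i j => by
    simpa [mul_apply, mulVec, dotProduct, P, Module.Basis.toMatrix_apply] using congrFun (hb j) i
  refine ⟨_, P, _, _, hPQ, ?_, hblocks⟩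
  have hrank := rank_transpose_mul_mul_of_mul_eq_one hPQ S
  rw [hblocks, rank_fromBlocks_diag, rank_zero, add_zero] at hrank
  exact isUnit_det_of_rank_eq_card (hrank.trans (Fintype.card_fin _).symm)

section Blocks

variable {m ι : Type*} [Fintype m] [Fintype ι]

theorem even_rank_of_toBlocks₁₁_eq_zero_of_toBlocks₂₂_eq_zero {T : Matrix (m ⊕ ι) (m ⊕ ι) K}
    (hT : Tᵀ = T) (h₁₁ : T.toBlocks₁₁ = 0) (h₂₂ : T.toBlocks₂₂ = 0) : Even T.rank := by
  have h₂₁ : T.toBlocks₂₁ = T.toBlocks₁₂ᵀ := by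
    conv_lhs => rw [← hT]
    rfl
  have hswap : T.submatrix (Equiv.refl _) (Equiv.sumComm ι m) =
      fromBlocks T.toBlocks₁₂ 0 0 T.toBlocks₁₂ᵀ := by
    conv_lhs => rw [← fromBlocks_toBlocks T, h₁₁, h₂₂, h₂₁]
    simp
  rw [← rank_submatrix T (Equiv.refl _) (Equiv.sumComm ι m), hswap, rank_fromBlocks_diag,
    rank_transpose]
  exact ⟨_, rfl⟩

variable [DecidableEq m]

theorem exists_isUnit_det_smul_fromBlocks_add [DecidableEq ι] {G : Matrix m m K}
    (hG : IsUnit G.det) {A : Matrix (m ⊕ ι) (m ⊕ ι) K} (hA : IsUnit A.toBlocks₂₂.det)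
    (hK : (Fintype.card m : Cardinal) < #K) :
    ∃ s : K, IsUnit (s • fromBlocks G 0 0 0 + A).det := by
  have := A.toBlocks₂₂.invertibleOfIsUnitDet hA
  have := G.invertibleOfIsUnitDet hG
  set E := A.toBlocks₁₁ - A.toBlocks₁₂ * ⅟A.toBlocks₂₂ * A.toBlocks₂₁
  have hdeg : (-(⅟G * E)).charpoly.natDegree < #K := by
    rwa [charpoly_natDegree_eq_dim]
  obtain ⟨s, hs⟩ := (-(⅟G * E)).charpoly.exists_eval_ne_zero_of_natDegree_lt_card
    (charpoly_monic _).ne_zero hdeg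
  refine ⟨s, ?_⟩
  have hblocks : s • fromBlocks G 0 0 0 + A =
      fromBlocks (s • G + A.toBlocks₁₁) A.toBlocks₁₂ A.toBlocks₂₁ A.toBlocks₂₂ := by
    conv_lhs => rw [← fromBlocks_toBlocks A]
    simp [fromBlocks_smul, fromBlocks_add]
  have hschur : s • G + E = G * (scalar m s - -(⅟G * E)) := by
    rw [sub_neg_eq_add, Matrix.mul_add, ← Matrix.mul_assoc, mul_invOf_self, Matrix.one_mul,
      scalar_apply, smul_eq_mul_diagonal]
  rw [eval_charpoly] at hs
  rw [hblocks, det_fromBlocks₂₂, add_sub_assoc, hschur, det_mul]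
  exact hA.mul (hG.mul hs.isUnit)

theorem exists_card_add_card_le_rank_smul_fromBlocks_add {G : Matrix m m K} (hG : IsUnit G.det)
    (hK : (Fintype.card m : Cardinal) < #K) (T : Matrix (m ⊕ ι) (m ⊕ ι) K)
    {κ : Type*} [Fintype κ] [DecidableEq κ] (f : κ → ι)
    (hf : IsUnit (T.toBlocks₂₂.submatrix f f).det) :
    ∃ s : K, Fintype.card m + Fintype.card κ ≤ (s • fromBlocks G 0 0 0 + T).rank := by
  obtain ⟨s, hs⟩ := exists_isUnit_det_smul_fromBlocks_add hG
    (A := T.submatrix (Sum.map id f) (Sum.map id f)) hf hK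
  refine ⟨s, ?_⟩
  have hsub : (s • fromBlocks G 0 0 0 + T).submatrix (Sum.map id f) (Sum.map id f) =
      s • fromBlocks G 0 0 0 + T.submatrix (Sum.map id f) (Sum.map id f) := by
    ext (i | i) (j | j) <;> simp
  have h := rank_submatrix_le (s • fromBlocks G 0 0 0 + T) (Sum.map id f) (Sum.map id f)
  rwa [hsub, rank_of_isUnit _ ((isUnit_iff_isUnit_det _).mpr hs), Fintype.card_sum] at h

theorem toBlocks₂₂_eq_zero_of_rank_le {G : Matrix m m K} (hG : IsUnit G.det)
    (hK : (Fintype.card m : Cardinal) < #K) {T : Matrix (m ⊕ ι) (m ⊕ ι) K} (hT : Tᵀ = T)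
    (hrank : ∀ s : K, (s • fromBlocks G 0 0 0 + T).rank ≤ Fintype.card m) :
    T.toBlocks₂₂ = 0 := by
  have hdiag : ∀ i, T (.inr i) (.inr i) = 0 := by
    intro i
    by_contra h
    obtain ⟨s, hs⟩ := exists_card_add_card_le_rank_smul_fromBlocks_add hG hK T
      (fun _ : Unit => i) (by simpa [toBlocks₂₂] using h)
    have := hrank s
    rw [Fintype.card_unit] at hs
    omega
  ext i j
  by_contra h
  have hji : T (.inr j) (.inr i) = T (.inr i) (.inr j) := by
    conv_lhs => rw [← hT]
    rfl
  obtain ⟨s, hs⟩ := exists_card_add_card_le_rank_smul_fromBlocks_add hG hK T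
    ![i, j] (by rw [det_fin_two]; simpa [toBlocks₂₂, hdiag, hji] using h)
  have := hrank s
  rw [Fintype.card_fin] at hs
  omega

theorem finrank_le_of_fromBlocks_mem (N : Submodule K (Matrix (m ⊕ ι) (m ⊕ ι) K))
    (hsymm : ∀ T ∈ N, Tᵀ = T) (hodd : ∀ T ∈ N, T ≠ 0 → Odd T.rank)
    (hle : ∀ T ∈ N, T.rank ≤ Fintype.card m) {G : Matrix m m K} (hG : IsUnit G.det)
    (hGN : fromBlocks G 0 0 0 ∈ N) (hK : (Fintype.card m : Cardinal) < #K) :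
    Module.finrank K N ≤ Fintype.card m * (Fintype.card m + 1) / 2 := by
  let Φ : N →ₗ[K] Sym2 m → K := LinearMap.pi fun p =>
    entryLinearMap K K (Sum.inl p.out.1 : m ⊕ ι) (Sum.inl p.out.2) ∘ₗ N.subtype
  have hΦ : Function.Injective Φ := by
    rw [← LinearMap.ker_eq_bot, LinearMap.ker_eq_bot']
    rintro ⟨T, hT⟩ hΦT
    have h₁₁ : T.toBlocks₁₁ = 0 := by
      ext i j
      show T (.inl i) (.inl j) = 0
      rw [← IsSymm.apply_out (hsymm T hT) Sum.inl i j]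
      exact congrFun hΦT s(i, j)
    have h₂₂ : T.toBlocks₂₂ = 0 := toBlocks₂₂_eq_zero_of_rank_le hG hK (hsymm T hT) fun s =>
      hle _ (N.add_mem (N.smul_mem s hGN) hT)
    by_contra hT0
    exact Nat.not_odd_iff_even.mpr
      (even_rank_of_toBlocks₁₁_eq_zero_of_toBlocks₂₂_eq_zero (hsymm T hT) h₁₁ h₂₂)
      (hodd T hT fun h => hT0 (Subtype.ext h))
  calc Module.finrank K N ≤ Module.finrank K (Sym2 m → K) :=
        LinearMap.finrank_le_finrank_of_injective hΦ
    _ = Fintype.card m * (Fintype.card m + 1) / 2 := by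
        rw [Module.finrank_fintype_fun_eq_card, Sym2.card, Nat.choose_two_right,
          Nat.add_sub_cancel, Nat.mul_comm]

end Blocks

end Matrix

theorem odd_rank_subspace_dim_bound_general {K : Type*} [Field K] (n r : ℕ)
    (N : Submodule K (Matrix (Fin n) (Fin n) K))
    (hsymm : ∀ S ∈ N, Sᵀ = S)
    (hodd : ∀ S ∈ N, S ≠ 0 → Odd S.rank)
    (hle : ∀ S ∈ N, S.rank ≤ r)
    (hmax : ∃ S ∈ N, S.rank = r)
    (hcard : (r + 1 : Cardinal) ≤ Cardinal.mk K) :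
    Module.finrank K N ≤ r * (r + 1) / 2 := by
  obtain ⟨S, hSN, rfl⟩ := hmax
  obtain ⟨d, P, Q, G, hPQ, hG, hPSP⟩ := exists_transpose_mul_mul_eq_fromBlocks (hsymm S hSN)
  let C := mulRightLinearMap _ K P ∘ₗ mulLeftLinearMap _ K Pᵀ
  have hC : ∀ T, C T = Pᵀ * T * P := fun _ => rfl
  have hCinj : Function.Injective C := fun T T' h => by
    rw [← transpose_mul_transpose_mul_mul_mul_of_mul_eq_one hPQ T,
      ← transpose_mul_transpose_mul_mul_mul_of_mul_eq_one hPQ T', ← hC, ← hC, h]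
  have hK : (Fintype.card (Fin S.rank) : Cardinal) < #K := by
    rw [Fintype.card_fin]
    exact (Nat.cast_lt.mpr S.rank.lt_succ_self).trans_le (by exact_mod_cast hcard)
  calc Module.finrank K N = Module.finrank K (N.map C) :=
        (N.equivMapOfInjective C hCinj).finrank_eq
    _ ≤ S.rank * (S.rank + 1) / 2 := by
      simpa using finrank_le_of_fromBlocks_mem (N.map C)
        (by rintro _ ⟨T, hT, rfl⟩; simp [hC, transpose_mul, hsymm T hT, Matrix.mul_assoc])
        (by rintro _ ⟨T, hT, rfl⟩ h
            rw [hC, rank_transpose_mul_mul_of_mul_eq_one hPQ]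
            exact hodd T hT (by rintro rfl; simp [hC] at h))
        (by rintro _ ⟨T, hT, rfl⟩
            simpa [hC, rank_transpose_mul_mul_of_mul_eq_one hPQ] using hle T hT)
        hG ⟨S, hSN, hPSP⟩ hK

/-- A nonzero subspace of symmetric n×n matrices in which every nonzero element has
odd rank, with maximum rank r and |K| ≥ r + 1 (in particular if K is infinite),
has dimension at most r(r+1)/2. -/
theorem odd_rank_subspace_dim_bound {K : Type*} [Field K] (n r : ℕ)
    (N : Submodule K (Matrix (Fin n) (Fin n) K))
    (hne : N ≠ ⊥)
    (hsymm : ∀ S ∈ N, Sᵀ = S)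
    (hodd : ∀ S ∈ N, S ≠ 0 → Odd S.rank)
    (hle : ∀ S ∈ N, S.rank ≤ r)
    (hmax : ∃ S ∈ N, S.rank = r)
    (hcard : (r + 1 : Cardinal) ≤ Cardinal.mk K) :
    Module.finrank K N ≤ r * (r + 1) / 2 :=
  odd_rank_subspace_dim_bound_general n r N hsymm hodd hle hmax hcard
end

section
/- Let K be a field of characteristic 2, V an n-dimensional K-vector space, and M a subspace of Symm(V) with M ∩ Alt(V) = 0. Define V(M) = {v ∈ V : f(v,v) = 0 for all f ∈ M}. Then dim V(M) ≤ n − dim M. -/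
/-!
In characteristic 2 the diagonal `v ↦ f v v` of a symmetric bilinear form is additive, so the
vectors on which it vanishes form a subspace. Choose a complement `C` of `V(M)` with a basis
`b`. A form `f ∈ M` vanishing on every `b i` then vanishes on the diagonal of `V(M) + C = V`,
i.e. is alternating, hence zero. Thus `f ↦ (f (b i) (b i))ᵢ` embeds `M` linearly into
`K ^ dim C`, and `dim M ≤ n - dim V(M)`.
-/

namespace LinearMap.BilinForm

variable {R M : Type*} [CommRing R] [CharP R 2] [AddCommGroup M] [Module R M]
  {f : LinearMap.BilinForm R M}

theorem IsSymm.apply_add_add_self (hf : f.IsSymm) (x y : M) :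
    f (x + y) (x + y) = f x x + f y y := by
  have hcross : f x y + f y x = 0 := by
    rw [← hf.eq x y]
    exact CharTwo.add_self_eq_zero _
  simp only [map_add, LinearMap.add_apply]
  linear_combination hcross

theorem IsSymm.apply_self_eq_zero_of_mem_span (hf : f.IsSymm) {s : Set M}
    (hs : ∀ v ∈ s, f v v = 0) {v : M} (hv : v ∈ Submodule.span R s) : f v v = 0 := by
  induction hv using Submodule.span_induction with
  | mem x hx => exact hs x hx
  | zero => simp
  | add x y _ _ hx hy => rw [hf.apply_add_add_self, hx, hy, add_zero]
  | smul c x _ hx => simp [hx]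

end LinearMap.BilinForm

open LinearMap.BilinForm in
theorem finrank_le_of_diag_eq_zero_of_sup_eq_top {K V : Type*} [Field K] [CharP K 2]
    [AddCommGroup V] [Module K V] {M : Submodule K (V →ₗ[K] V →ₗ[K] K)}
    (hsymm : ∀ f ∈ M, IsSymm f) (halt : ∀ f ∈ M, IsAlt f → f = 0)
    {W C : Submodule K V} [FiniteDimensional K C] (hW : ∀ v ∈ W, ∀ f ∈ M, f v v = 0)
    (hC : W ⊔ C = ⊤) :
    Module.finrank K M ≤ Module.finrank K C := by
  let b := Module.finBasis K C
  have hspan : Submodule.span K ((W : Set V) ∪ Set.range (C.subtype ∘ b)) = ⊤ := by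
    rw [Submodule.span_union, Submodule.span_eq, Set.range_comp, ← Submodule.map_span, b.span_eq,
      Submodule.map_top, Submodule.range_subtype, hC]
  have hzero : ∀ f ∈ M, (∀ i, f (b i) (b i) = 0) → f = 0 := by
    refine fun f hf hb => halt f hf fun v => ?_
    refine (hsymm f hf).apply_self_eq_zero_of_mem_span ?_ (hspan ▸ Submodule.mem_top)
    rintro _ (hw | ⟨i, rfl⟩)
    · exact hW _ hw f hf
    · exact hb i
  let Φ : M →ₗ[K] Fin (Module.finrank K C) → K :=
    LinearMap.pi fun i => LinearMap.applyₗ (b i : V) ∘ₗ LinearMap.applyₗ (b i : V) ∘ₗ M.subtype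
  have hinj : Function.Injective Φ := by
    intro f g hfg
    -- `M.sub_mem` does not unify the two `Module` instances on iterated linear maps
    have hsub : (f - g : V →ₗ[K] V →ₗ[K] K) ∈ M :=
      @Submodule.sub_mem K (V →ₗ[K] V →ₗ[K] K) _ _ _ M _ _ f.2 g.2
    refine Subtype.ext <| sub_eq_zero.mp <| hzero _ hsub fun i => ?_
    simpa [Φ, sub_eq_zero] using congrFun hfg i
  simpa using LinearMap.finrank_le_finrank_of_injective hinj

/-- In characteristic 2, if M is a subspace of symmetric bilinear forms containing
no nonzero alternating form, then dim V(M) ≤ n − dim M, where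
V(M) = {v : f(v,v) = 0 for all f ∈ M}. -/
theorem dim_common_isotropic_le {K V : Type*} [Field K] [CharP K 2]
    [AddCommGroup V] [Module K V] [FiniteDimensional K V] (n : ℕ)
    (hdim : Module.finrank K V = n)
    (M : Submodule K (V →ₗ[K] V →ₗ[K] K))
    (hsymm : ∀ f ∈ M, LinearMap.BilinForm.IsSymm f)
    (halt : ∀ f ∈ M, LinearMap.BilinForm.IsAlt f → f = 0)
    (W : Submodule K V)
    (hW : (W : Set V) = {v : V | ∀ f ∈ M, f v v = 0}) :
    Module.finrank K W ≤ n - Module.finrank K M := by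
  obtain ⟨C, hC⟩ := W.exists_isCompl
  have hdiag : ∀ v ∈ W, ∀ f ∈ M, f v v = 0 := fun v hv => by
    rw [← SetLike.mem_coe, hW] at hv
    exact hv
  have hM := finrank_le_of_diag_eq_zero_of_sup_eq_top hsymm halt hdiag hC.sup_eq_top
  have hWC := Submodule.finrank_add_eq_of_isCompl hC
  omega
end

section
/- Let K be a perfect field of characteristic 2, V an n-dimensional K-vector space, and M a subspace of Symm(V) with M ∩ Alt(V) = 0. Then dim V(M) = n − dim M, where V(M) = {v ∈ V : f(v,v) = 0 for all f ∈ M}. -/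
/-!
In characteristic 2 the diagonal `v ↦ f v v` of a symmetric bilinear form is additive and
Frobenius-semilinear, so over a perfect field `v ↦ √(f v v)` is a linear functional. This gives a
map `M → Dual K V` that is semilinear for the inverse Frobenius, and injective because `M` contains
no nonzero alternating form; hence its image has dimension `dim M`. The set `V(M)` is the common
kernel of that image, so it has dimension `n - dim M`.
-/

theorem LinearMap.finrank_range_of_injective_of_ringEquiv {R S M N : Type*} [Semiring R]
    [Semiring S] [AddCommMonoid M] [Module R M] [AddCommMonoid N] [Module S N] (σ : R ≃+* S)
    (f : M →ₛₗ[(σ : R →+* S)] N) (hf : Function.Injective f) :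
    Module.finrank S (LinearMap.range f) = Module.finrank R M := by
  have := RingHomInvPair.of_ringEquiv σ
  have := RingHomInvPair.of_ringEquiv_symm σ
  have h := congrArg Cardinal.toNat <| lift_rank_eq_of_equiv_equiv σ
    (LinearEquiv.ofInjective f hf).toAddEquiv σ.bijective
    (LinearEquiv.ofInjective f hf).map_smulₛₗ
  rw [Cardinal.toNat_lift, Cardinal.toNat_lift] at h
  exact h.symm

namespace LinearMap.BilinForm

theorem IsSymm.apply_add_add_of_charTwo {R V : Type*} [CommRing R] [CharP R 2] [AddCommGroup V]
    [Module R V] {f : LinearMap.BilinForm R V} (hf : f.IsSymm) (u v : V) :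
    f (u + v) (u + v) = f u u + f v v := by
  simp only [map_add, LinearMap.add_apply, hf.eq v u]
  linear_combination CharTwo.add_self_eq_zero (f u v)

section Perfect

variable {R V : Type*} [CommRing R] [CharP R 2] [PerfectRing R 2] [AddCommGroup V] [Module R V]

noncomputable def sqrtDiag {f : LinearMap.BilinForm R V} (hf : f.IsSymm) : Module.Dual R V where
  toFun v := (frobeniusEquiv R 2).symm (f v v)
  map_add' u v := by rw [hf.apply_add_add_of_charTwo, map_add]
  map_smul' c v := by
    simp only [map_smul, LinearMap.smul_apply, smul_eq_mul, RingHom.id_apply]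
    rw [← mul_assoc, ← sq, map_mul, frobeniusEquiv_symm_pow]

@[simp]
theorem sqrtDiag_apply {f : LinearMap.BilinForm R V} (hf : f.IsSymm) (v : V) :
    sqrtDiag hf v = (frobeniusEquiv R 2).symm (f v v) :=
  rfl

noncomputable def sqrtDiagHom (M : Submodule R (LinearMap.BilinForm R V))
    (hM : ∀ f ∈ M, f.IsSymm) :
    M →ₛₗ[((frobeniusEquiv R 2).symm : R →+* R)] Module.Dual R V where
  toFun f := sqrtDiag (hM f f.2)
  map_add' f g := by ext v; simp
  map_smul' c f := by ext v; simp

variable {M : Submodule R (LinearMap.BilinForm R V)} (hM : ∀ f ∈ M, f.IsSymm)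

theorem sqrtDiagHom_injective (halt : ∀ f ∈ M, f.IsAlt → f = 0) :
    Function.Injective (sqrtDiagHom M hM) := by
  intro f g hfg
  have hdiag (v : V) : (f : LinearMap.BilinForm R V) v v = (g : LinearMap.BilinForm R V) v v :=
    (frobeniusEquiv R 2).symm.injective (LinearMap.congr_fun hfg v)
  -- `M.sub_mem` does not elaborate here (instance mismatch on bilinear forms), hence `f + (-1) • g`.
  have hsub : (f : LinearMap.BilinForm R V) + (-1 : R) • (g : LinearMap.BilinForm R V) = 0 :=
    halt _ (M.add_mem f.2 (M.smul_mem _ g.2)) fun v => by simp [hdiag v]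
  refine Subtype.ext (LinearMap.ext₂ fun x y => ?_)
  have hxy := LinearMap.congr_fun₂ hsub x y
  simp only [LinearMap.add_apply, LinearMap.smul_apply, LinearMap.zero_apply, smul_eq_mul] at hxy
  linear_combination hxy

theorem mem_dualCoannihilator_range_sqrtDiagHom (v : V) :
    v ∈ (LinearMap.range (sqrtDiagHom M hM)).dualCoannihilator ↔ ∀ f ∈ M, f v v = 0 := by
  rw [Submodule.mem_dualCoannihilator]
  constructor
  · intro h f hf
    simpa [sqrtDiagHom] using h _ ⟨⟨f, hf⟩, rfl⟩
  · rintro h _ ⟨f, rfl⟩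
    simp [sqrtDiagHom, h f f.2]

end Perfect

end LinearMap.BilinForm

/-- Over a perfect field of characteristic 2, if M is a subspace of symmetric
bilinear forms with M ∩ Alt(V) = 0, then dim V(M) = n − dim M. -/
theorem dim_common_isotropic_eq_of_perfect {K V : Type*} [Field K] [CharP K 2]
    [PerfectField K] [AddCommGroup V] [Module K V] [FiniteDimensional K V] (n : ℕ)
    (hdim : Module.finrank K V = n)
    (M : Submodule K (V →ₗ[K] V →ₗ[K] K))
    (hsymm : ∀ f ∈ M, LinearMap.BilinForm.IsSymm f)
    (halt : ∀ f ∈ M, LinearMap.BilinForm.IsAlt f → f = 0)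
    (W : Submodule K V)
    (hW : (W : Set V) = {v : V | ∀ f ∈ M, f v v = 0}) :
    Module.finrank K W = n - Module.finrank K M := by
  set Θ := LinearMap.BilinForm.sqrtDiagHom M hsymm
  have hWΘ : W = (LinearMap.range Θ).dualCoannihilator := SetLike.coe_injective <| hW.trans <|
    Set.ext fun v => (LinearMap.BilinForm.mem_dualCoannihilator_range_sqrtDiagHom hsymm v).symm
  have hΘ : Module.finrank K (LinearMap.range Θ) = Module.finrank K M :=
    LinearMap.finrank_range_of_injective_of_ringEquiv _ Θ
      (LinearMap.BilinForm.sqrtDiagHom_injective hsymm halt)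
  have hsum := Subspace.finrank_add_finrank_dualCoannihilator_eq (LinearMap.range Θ)
  rw [hΘ, ← hWΘ, hdim] at hsum
  exact Nat.eq_sub_of_add_eq' hsum
end

section
/- Let K be a field of characteristic 2 with |K| ≥ r+1 (or K infinite), V an n-dimensional K-vector space, and M a subspace of Symm(V) with M ∩ Alt(V) = 0 such that every element of M has rank at most r. Then dim M ≤ r. -/
/-!
Pick `f ∈ M` of maximal rank `s ≤ r` and vectors `w₁, …, w_s` spanning a complement of
`ker f`; the Gram matrix `A` of `f` on `w` is invertible. Let `g ∈ M` and `u ∈ ker f`. The forms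
`f + y • g` and `g` all have rank at most `s`, so the `(s+1) × (s+1)` Gram determinant of
`f + Y • g` on `w, u` is a polynomial in `Y` of degree at most `s` (its coefficient of `Y ^ (s+1)`
is the Gram determinant of `g`) with at least `s + 1` roots, hence zero. As `u ∈ ker f`, its last
row is divisible by `Y`, and after removing this factor the constant term is `det A * g u u`.
So every `g ∈ M` vanishes on the diagonal of `ker f`. In characteristic 2 the zero set of
`v ↦ g v v` is a subspace when `g` is symmetric, so `g ↦ (g wᵢ wᵢ)ᵢ` is injective on `M`
(`M` has no nonzero alternating form), and `dim M ≤ s ≤ r`.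
-/

open Polynomial Matrix Module Cardinal LinearMap

namespace Polynomial

variable {R : Type*} [CommRing R] [IsDomain R] {n : Type*} [Fintype n] [DecidableEq n]

theorem det_X_smul_add_C_eq_zero {A B : Matrix n n R} (hcard : (Fintype.card n : Cardinal) ≤ #R)
    (hA : A.det = 0) (hAB : ∀ r : R, (r • A + B).det = 0) :
    ((X : R[X]) • A.map C + B.map C).det = 0 := by
  set p := ((X : R[X]) • A.map C + B.map C).det
  by_contra hp
  have hdeg : p.natDegree < Fintype.card n := by
    refine (natDegree_det_X_add_C_le A B).lt_of_ne fun h ↦ hp ?_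
    rw [← leadingCoeff_eq_zero, leadingCoeff, h, coeff_det_X_add_C_card, hA]
  refine hp (eq_zero_of_forall_eval_zero_of_natDegree_lt_card p (fun r ↦ ?_) ?_)
  · rw [← coe_evalRingHom, RingHom.map_det, ← hAB r]
    congr 1
    ext i j
    simp [mul_comm r]
  · exact (Nat.cast_lt.mpr hdeg).trans_le hcard

theorem det_mul_det_eq_zero_of_det_X_smul_fromBlocks_add_eq_zero {m : Type*} [Fintype m]
    [DecidableEq m] (A P : Matrix n n R) (Q : Matrix n m R) (Q' : Matrix m n R) (S : Matrix m m R)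
    (h : ((X : R[X]) • (fromBlocks P Q Q' S).map C + (fromBlocks A 0 0 0).map C).det = 0) :
    A.det * S.det = 0 := by
  have hfactor : (X : R[X]) • (fromBlocks P Q Q' S).map C + (fromBlocks A 0 0 0).map C =
      diagonal (Sum.elim 1 fun _ ↦ X) *
        ((X : R[X]) • (fromBlocks P Q 0 0).map C + (fromBlocks A 0 Q' S).map C) := by
    refine Matrix.ext fun i j ↦ ?_
    rcases i with i | i <;> rcases j with j | j <;> simp [diagonal_mul, mul_add]
  rw [hfactor, det_mul, det_diagonal, Fintype.prod_sum_type] at h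
  simp only [Sum.elim_inl, Sum.elim_inr, Pi.one_apply, Finset.prod_const_one, Finset.prod_const,
    Finset.card_univ, one_mul] at h
  have h0 := congrArg (coeff · 0) ((mul_eq_zero.mp h).resolve_left (pow_ne_zero _ X_ne_zero))
  simpa only [coeff_det_X_add_C_zero, det_fromBlocks_zero₁₂, coeff_zero] using h0

end Polynomial

namespace LinearMap.BilinForm

variable {R M : Type*} [CommRing R] [AddCommGroup M] [Module R M]

theorem IsSymm.isAlt_of_span_eq_top [CharP R 2] {B : LinearMap.BilinForm R M}
    (hB : B.IsSymm) {s : Set M} (hs : Submodule.span R s = ⊤) (h : ∀ v ∈ s, B v v = 0) :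
    B.IsAlt := by
  intro v
  have hv : v ∈ Submodule.span R s := hs ▸ Submodule.mem_top
  induction hv using Submodule.span_induction with
  | mem x hx => exact h x hx
  | zero => simp
  | add x y _ _ hx hy =>
    simp only [map_add, LinearMap.add_apply, hx, hy, zero_add, add_zero, hB.eq y x,
      CharTwo.add_self_eq_zero]
  | smul c x _ hx => simp [hx]

theorem IsSymm.nondegenerate_restrict_of_isCompl_ker {B : LinearMap.BilinForm R M}
    (hB : B.IsSymm) {W : Submodule R M} (hW : IsCompl (ker B) W) :
    (B.restrict W).Nondegenerate := by
  refine B.nondegenerate_restrict_of_disjoint_orthogonal hB.isRefl <|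
    Submodule.disjoint_def.mpr fun x hxW hxW' ↦ ?_
  suffices B x = 0 from Submodule.disjoint_def.mp hW.disjoint x this hxW
  ext y
  have hy : y ∈ ker B ⊔ W := hW.sup_eq_top ▸ Submodule.mem_top
  obtain ⟨k, hk, w, hw, rfl⟩ := Submodule.mem_sup.mp hy
  rw [map_add, hB.eq, hk, hB.eq, (mem_orthogonal_iff.mp hxW' w hw)]
  simp

end LinearMap.BilinForm

section

variable {K V V' : Type*} [Field K] [AddCommGroup V] [Module K V] [AddCommGroup V']
  [Module K V']

theorem LinearMap.det_toMatrix₂Aux_eq_zero_of_finrank_range_lt [FiniteDimensional K V]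
    {ι : Type*} [Fintype ι] [DecidableEq ι] (h : V →ₗ[K] V' →ₗ[K] K) (v : ι → V)
    (v' : ι → V') (hr : finrank K (range h) < Fintype.card ι) :
    (toMatrix₂Aux K v v' h).det = 0 := by
  by_contra hdet
  let evalAt : range h →ₗ[K] ι → K :=
    (LinearMap.pi fun j ↦ applyₗ (v' j)) ∘ₗ (range h).subtype
  have hli : LinearIndependent K (evalAt ∘ fun i ↦ ⟨h (v i), mem_range_self h (v i)⟩) :=
    linearIndependent_rows_of_det_ne_zero hdet
  exact hr.not_ge hli.of_comp.fintype_card_le_finrank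

theorem LinearMap.BilinForm.apply_self_eq_zero_of_mem_ker [FiniteDimensional K V]
    {ι : Type*} [Fintype ι] [DecidableEq ι] {f g : LinearMap.BilinForm K V} {w : ι → V}
    (hcard : (Fintype.card ι + 1 : Cardinal) ≤ #K) (hw : (toMatrix₂Aux K w w f).det ≠ 0)
    (hg : finrank K (range g) ≤ Fintype.card ι)
    (hfg : ∀ y : K, finrank K (range (f + y • g)) ≤ Fintype.card ι)
    {u : V} (hu : u ∈ ker f) (hu' : ∀ x, f x u = 0) : g u u = 0 := by
  let v : ι ⊕ Unit → V := Sum.elim w fun _ ↦ u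
  have hcard' : Fintype.card (ι ⊕ Unit) = Fintype.card ι + 1 := by simp
  have hdet : ∀ h : LinearMap.BilinForm K V, finrank K (range h) ≤ Fintype.card ι →
      (toMatrix₂Aux K v v h).det = 0 := fun h hh ↦
    h.det_toMatrix₂Aux_eq_zero_of_finrank_range_lt v v (by omega)
  have hF : toMatrix₂Aux K v v f = fromBlocks (toMatrix₂Aux K w w f) 0 0 0 := by
    refine Matrix.ext fun i j ↦ ?_
    rcases i with i | i <;> rcases j with j | j <;> simp [v, mem_ker.mp hu, hu']
  set G := toMatrix₂Aux K v v g
  have hpoly := det_X_smul_add_C_eq_zero (A := G) (B := toMatrix₂Aux K v v f)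
    (by rwa [hcard', Nat.cast_add_one]) (hdet g hg) fun y ↦ by
      rw [← map_smul, ← map_add, add_comm]; exact hdet _ (hfg y)
  rw [hF, ← fromBlocks_toBlocks G] at hpoly
  have := det_mul_det_eq_zero_of_det_X_smul_fromBlocks_add_eq_zero _ _ _ _ _ hpoly
  simpa [hw, G, v, toBlocks₂₂] using this

theorem LinearMap.BilinForm.IsSymm.exists_det_toMatrix₂Aux_ne_zero [FiniteDimensional K V]
    {f : LinearMap.BilinForm K V} (hf : f.IsSymm) :
    ∃ w : Fin (finrank K (range f)) → V,
      (toMatrix₂Aux K w w f).det ≠ 0 ∧ ker f ⊔ Submodule.span K (Set.range w) = ⊤ := by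
  obtain ⟨W, hW⟩ := (ker f).exists_isCompl
  have hWdim : finrank K W = finrank K (range f) := by
    have := Submodule.finrank_add_eq_of_isCompl hW
    have := f.finrank_range_add_finrank_ker
    omega
  let b := Module.finBasisOfFinrankEq K W hWdim
  refine ⟨W.subtype ∘ b, ?_, ?_⟩
  · have := (LinearMap.BilinForm.nondegenerate_iff_det_ne_zero b).mp
      (hf.nondegenerate_restrict_of_isCompl_ker hW)
    convert this using 2
    ext i j
    simp [BilinForm.toMatrix_apply]
  · rw [Set.range_comp, ← Submodule.map_span, b.span_eq, Submodule.map_top,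
      Submodule.range_subtype, hW.sup_eq_top]

theorem finrank_le_card_of_forall_apply_self_eq_zero [CharP K 2] [FiniteDimensional K V]
    {ι : Type*} [Fintype ι] (M : Submodule K (LinearMap.BilinForm K V))
    (hsymm : ∀ f ∈ M, f.IsSymm) (halt : ∀ f ∈ M, f.IsAlt → f = 0)
    {U : Submodule K V} {w : ι → V}
    (hUw : U ⊔ Submodule.span K (Set.range w) = ⊤) (hU : ∀ g ∈ M, ∀ u ∈ U, g u u = 0) :
    finrank K M ≤ Fintype.card ι := by
  let θ : LinearMap.BilinForm K V →ₗ[K] ι → K :=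
    diagLinearMap ι K K ∘ₗ toMatrix₂Aux K w w
  have hθ : Function.Injective (θ.domRestrict M) := by
    -- Naming the ambient type lets unification find its `AddCommGroup` instance, which it cannot
    -- recover from the `AddCommMonoid` instance stored in the type of `M`.
    refine (injective_domRestrict_iff (M := LinearMap.BilinForm K V)).mpr <|
      Submodule.disjoint_def.mpr fun g hg hθg ↦ ?_
    refine halt g hg ((hsymm g hg).isAlt_of_span_eq_top (s := U ∪ Set.range w) ?_ ?_)
    · rw [Submodule.span_union, Submodule.span_eq, hUw]
    · rintro v (hv | ⟨i, rfl⟩)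
      · exact hU g hg v hv
      · exact congrFun hθg i
  simpa using LinearMap.finrank_le_finrank_of_injective hθ

theorem Set.Nonempty.exists_forall_finrank_range_le [FiniteDimensional K V']
    {S : Set (V →ₗ[K] V')} (hS : S.Nonempty) :
    ∃ f ∈ S, ∀ g ∈ S, finrank K (LinearMap.range g) ≤ finrank K (LinearMap.range f) := by
  have hbdd : BddAbove ((fun g ↦ finrank K (LinearMap.range g)) '' S) :=
    ⟨finrank K V', by rintro _ ⟨g, -, rfl⟩; exact Submodule.finrank_le _⟩
  obtain ⟨f, hf, hfmax⟩ := Nat.sSup_mem (hS.image _) hbdd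
  exact ⟨f, hf, fun g hg ↦ (le_csSup hbdd ⟨g, hg, rfl⟩).trans_eq hfmax.symm⟩

end

theorem rank_related_dimension_bound_general {K V : Type*} [Field K] [CharP K 2]
    [AddCommGroup V] [Module K V] [FiniteDimensional K V] (r : ℕ)
    (hcard : (r + 1 : Cardinal) ≤ Cardinal.mk K)
    (M : Submodule K (V →ₗ[K] V →ₗ[K] K))
    (hsymm : ∀ f ∈ M, LinearMap.BilinForm.IsSymm f)
    (halt : ∀ f ∈ M, LinearMap.BilinForm.IsAlt f → f = 0)
    (hrank : ∀ f ∈ M, Module.finrank K (LinearMap.range f) ≤ r) :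
    Module.finrank K M ≤ r := by
  obtain ⟨f, hf, hmax⟩ := M.nonempty.exists_forall_finrank_range_le
  obtain ⟨w, hw, hspan⟩ := (hsymm f hf).exists_det_toMatrix₂Aux_ne_zero
  have hfr := hrank f hf
  have hcard' : (Fintype.card (Fin (finrank K (range f))) + 1 : Cardinal) ≤ #K := by
    rw [Fintype.card_fin]
    exact le_trans (by gcongr) hcard
  refine (finrank_le_card_of_forall_apply_self_eq_zero M hsymm halt hspan ?_).trans
    ((Fintype.card_fin _).trans_le hfr)
  intro g hg u hu
  refine LinearMap.BilinForm.apply_self_eq_zero_of_mem_ker hcard' hw (by simpa using hmax g hg)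
    (fun y ↦ by simpa using hmax _ (M.add_mem hf (M.smul_mem y hg))) hu fun x ↦ ?_
  rw [(hsymm f hf).eq, mem_ker.mp hu, LinearMap.zero_apply]

/-- In characteristic 2 with |K| ≥ r + 1 (in particular K infinite), a subspace of
symmetric bilinear forms with no nonzero alternating element in which every element
has rank at most r has dimension at most r. -/
theorem rank_related_dimension_bound {K V : Type*} [Field K] [CharP K 2]
    [AddCommGroup V] [Module K V] [FiniteDimensional K V] (n r : ℕ)
    (hdim : Module.finrank K V = n)
    (hcard : (r + 1 : Cardinal) ≤ Cardinal.mk K)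
    (M : Submodule K (V →ₗ[K] V →ₗ[K] K))
    (hsymm : ∀ f ∈ M, LinearMap.BilinForm.IsSymm f)
    (halt : ∀ f ∈ M, LinearMap.BilinForm.IsAlt f → f = 0)
    (hrank : ∀ f ∈ M, Module.finrank K (LinearMap.range f) ≤ r) :
    Module.finrank K M ≤ r :=
  rank_related_dimension_bound_general r hcard M hsymm halt hrank
end

section
/- Let a, b be integers with 1 ≤ b ≤ a and let x ≥ 4 be a real number. Define F(x) = ∏_{i=1}^{b} (x^{a−i+1} − 1)/(x^i − 1). Then F(x) < 4·x^{(a−b)b}. -/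
/-! Dropping the `- 1`s bounds the numerators by `x ^ ((a - b) * b + ∑ i)`. Writing each denominator
as `x ^ i * (1 - x⁻¹ ^ i)`, the Weierstrass product inequality `1 - ∑ tᵢ ≤ ∏ (1 - tᵢ)` and
`∑_{i ≥ 1} x⁻¹ ^ i = 1 / (x - 1)` bound their product below by `(x - 2) / (x - 1) * x ^ ∑ i`.
Hence `F(x) ≤ (x - 1) / (x - 2) * x ^ ((a - b) * b)`, and `(x - 1) / (x - 2) ≤ 3 / 2` for `x ≥ 4`. -/

open Finset

theorem Finset.one_sub_sum_le_prod_one_sub {ι R : Type*} [CommRing R] [LinearOrder R]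
    [IsStrictOrderedRing R] (s : Finset ι) (t : ι → R) (h0 : ∀ i ∈ s, 0 ≤ t i)
    (h1 : ∀ i ∈ s, t i ≤ 1) :
    1 - ∑ i ∈ s, t i ≤ ∏ i ∈ s, (1 - t i) := by
  classical
  induction s using Finset.induction_on with
  | empty => simp
  | insert j s hj ih =>
    rw [sum_insert hj, prod_insert hj]
    have hj0 : 0 ≤ t j := h0 j (mem_insert_self j s)
    have hj1 : 0 ≤ 1 - t j := sub_nonneg.mpr (h1 j (mem_insert_self j s))
    have hs0 : 0 ≤ ∑ i ∈ s, t i := sum_nonneg fun i hi => h0 i (mem_insert_of_mem hi)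
    have ih := ih (fun i hi => h0 i (mem_insert_of_mem hi)) (fun i hi => h1 i (mem_insert_of_mem hi))
    calc 1 - (t j + ∑ i ∈ s, t i)
        ≤ (1 - t j) * (1 - ∑ i ∈ s, t i) := by nlinarith [mul_nonneg hj0 hs0]
      _ ≤ (1 - t j) * ∏ i ∈ s, (1 - t i) := mul_le_mul_of_nonneg_left ih hj1

theorem sum_Icc_one_pow_le {K : Type*} [Field K] [LinearOrder K] [IsStrictOrderedRing K]
    {y : K} (hy0 : 0 ≤ y) (hy1 : y < 1) (n : ℕ) :
    ∑ i ∈ Icc 1 n, y ^ i ≤ y / (1 - y) := by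
  simpa [← Ico_add_one_right_eq_Icc] using geom_sum_Ico_le_of_lt_one (m := 1) (n := n + 1) hy0 hy1

theorem prod_pow_sub_one_le_pow_sum {ι R : Type*} [CommRing R] [LinearOrder R]
    [IsStrictOrderedRing R] (s : Finset ι) (e : ι → ℕ) {x : R}
    (hx : 1 ≤ x) : ∏ i ∈ s, (x ^ e i - 1) ≤ x ^ ∑ i ∈ s, e i := by
  rw [← prod_pow_eq_pow_sum]
  exact prod_le_prod (fun i _ => sub_nonneg.mpr (one_le_pow₀ hx)) (fun i _ => by linarith)

theorem mul_pow_sum_le_prod_pow_sub_one {K : Type*} [Field K] [LinearOrder K]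
    [IsStrictOrderedRing K] {x : K} (hx : 1 < x) (n : ℕ) :
    (x - 2) / (x - 1) * x ^ ∑ i ∈ Icc 1 n, i ≤ ∏ i ∈ Icc 1 n, (x ^ i - 1) := by
  have hx0 : 0 < x := by linarith
  have hy0 : 0 ≤ x⁻¹ := inv_nonneg.mpr hx0.le
  have hy1 : x⁻¹ < 1 := inv_lt_one_of_one_lt₀ hx
  have hfactor : ∀ i ∈ Icc 1 n, x ^ i - 1 = x ^ i * (1 - x⁻¹ ^ i) := fun i _ => by
    rw [mul_sub, mul_one, inv_pow, mul_inv_cancel₀ (pow_ne_zero i hx0.ne')]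
  have hgeom : (x - 2) / (x - 1) ≤ 1 - ∑ i ∈ Icc 1 n, x⁻¹ ^ i := by
    have h := sum_Icc_one_pow_le hy0 hy1 n
    have : x⁻¹ / (1 - x⁻¹) = 1 - (x - 2) / (x - 1) := by
      field_simp [(by linarith : x - 1 ≠ 0)]
      ring
    linarith
  rw [prod_congr rfl hfactor, prod_mul_distrib, prod_pow_eq_pow_sum, mul_comm]
  gcongr
  exact hgeom.trans (one_sub_sum_le_prod_one_sub _ _ (fun i _ => pow_nonneg hy0 i)
    (fun i _ => pow_le_one₀ hy0 hy1.le))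

theorem sum_Icc_sub_add_one {a b : ℕ} (hba : b ≤ a) :
    ∑ i ∈ Icc 1 b, (a - i + 1) = (a - b) * b + ∑ i ∈ Icc 1 b, i := by
  induction b with
  | zero => simp
  | succ b ih =>
    rw [sum_Icc_succ_top (by omega), sum_Icc_succ_top (by omega), ih (by omega)]
    obtain ⟨c, rfl⟩ := Nat.exists_eq_add_of_le hba
    rw [Nat.add_sub_cancel_left, show b + 1 + c - b = c + 1 by omega]
    ring

theorem advanced_inequality_general (a b : ℕ) (hba : b ≤ a)
    (x : ℝ) (hx : 4 ≤ x) :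
    (∏ i ∈ Finset.Icc 1 b, (x ^ (a - i + 1) - 1) / (x ^ i - 1)) <
      4 * x ^ ((a - b) * b) := by
  have hc : 0 < (x - 2) / (x - 1) := div_pos (by linarith) (by linarith)
  rw [prod_div_distrib]
  calc (∏ i ∈ Icc 1 b, (x ^ (a - i + 1) - 1)) / ∏ i ∈ Icc 1 b, (x ^ i - 1)
      ≤ x ^ (∑ i ∈ Icc 1 b, (a - i + 1)) / ((x - 2) / (x - 1) * x ^ ∑ i ∈ Icc 1 b, i) :=
        div_le_div₀ (by positivity) (prod_pow_sub_one_le_pow_sum _ _ (by linarith))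
          (by positivity) (mul_pow_sum_le_prod_pow_sub_one (by linarith) b)
    _ = (x - 1) / (x - 2) * x ^ ((a - b) * b) := by
        rw [sum_Icc_sub_add_one hba, pow_add]
        field_simp
    _ < 4 * x ^ ((a - b) * b) := by
        gcongr
        rw [div_lt_iff₀ (by linarith)]
        linarith

/-- For integers 1 ≤ b ≤ a and real x ≥ 4, the Gaussian binomial coefficient
F(x) = ∏_{i=1}^{b} (x^{a−i+1} − 1)/(x^i − 1) satisfies F(x) < 4 x^{(a−b)b}. -/
theorem advanced_inequality (a b : ℕ) (hb : 1 ≤ b) (hba : b ≤ a)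
    (x : ℝ) (hx : 4 ≤ x) :
    (∏ i ∈ Finset.Icc 1 b, (x ^ (a - i + 1) - 1) / (x ^ i - 1)) <
      4 * x ^ ((a - b) * b) :=
  advanced_inequality_general a b hba x hx
end

section
/- Under the hypotheses of the previous statement (char K = 2, |K| ≥ r+1, r odd, n = 2r, M ⊆ Symm(V) of dimension 3r with all nonzero ranks equal to r or n), if N and N₁ are distinct r-dimensional constant rank r subspaces of M with common radicals U and U₁ respectively, then U ∩ U₁ = 0 and hence V = U ⊕ U₁. -/
/-!
In characteristic 2 the diagonal `x ↦ f x x` of a symmetric form `f` is additive and satisfies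
`f (c • x) (c • x) = c ^ 2 * f x x`, so it is determined by its values on a spanning set, and it
vanishes exactly when `f` is alternating; alternating forms have even rank. For an
`r`-dimensional space `N` of forms of odd rank `r` with common radical `U`, recording the diagonal
on a basis of a complement of `U` is therefore an injective linear map `N → K ^ r`, hence onto:
the diagonal of every symmetric form vanishing on `U` is the diagonal of some element of `N`.

If `0 ≠ v ∈ U ∩ U₁`, then `U + U₁ ≠ V`, so some linear form `φ ≠ 0` vanishes on `U + U₁`, and the
diagonal `φ x ^ 2` is realized by some `g ∈ N` and `g₁ ∈ N₁`. Now `g - g₁ ∈ M` is alternating and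
kills `v`, so it is `0`: a nonzero element of `M` with nontrivial kernel has the odd rank `r`.
Hence `g = g₁ ≠ 0` and `U = U₁`; running the same argument on each element of `N₁` gives
`N₁ ≤ N`, contradicting `N ≠ N₁`.
-/

open Module LinearMap

theorem LinearMap.le_ker_of_ne_zero_imp {R V W : Type*} [Semiring R] [AddCommMonoid V]
    [Module R V] [AddCommMonoid W] [Module R W] {U : Submodule R V} {f : V →ₗ[R] W}
    (h : f ≠ 0 → ker f = U) : U ≤ ker f := by
  rcases eq_or_ne f 0 with rfl | hf
  · simp
  · exact (h hf).ge

theorem finrank_add_eq_of_forall_ker_eq {K V W : Type*} [Field K] [AddCommGroup V] [Module K V]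
    [FiniteDimensional K V] [AddCommGroup W] [Module K W] {N : Submodule K (V →ₗ[K] W)}
    {U : Submodule K V} {r : ℕ} (hN : N ≠ ⊥)
    (hrk : ∀ f ∈ N, f ≠ 0 → finrank K (range f) = r) (hU : ∀ f ∈ N, f ≠ 0 → ker f = U) :
    finrank K U + r = finrank K V := by
  obtain ⟨f, hf, hf0⟩ := N.ne_bot_iff.mp hN
  rw [← hrk f hf hf0, ← hU f hf hf0, add_comm]
  exact finrank_range_add_finrank_ker f

theorem Submodule.exists_sup_span_range_eq_top {K V : Type*} [Field K] [AddCommGroup V]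
    [Module K V] [FiniteDimensional K V] (U : Submodule K V) {r : ℕ}
    (hr : finrank K U + r = finrank K V) :
    ∃ b : Fin r → V, U ⊔ span K (Set.range b) = ⊤ := by
  obtain ⟨C, hC⟩ := U.exists_isCompl
  have hCr : finrank K C = r := by
    have := Submodule.finrank_add_eq_of_isCompl hC
    omega
  let B := Module.finBasisOfFinrankEq K C hCr
  refine ⟨C.subtype ∘ B, ?_⟩
  rw [Set.range_comp, ← Submodule.map_span, B.span_eq, Submodule.map_top, range_subtype]
  exact hC.sup_eq_top

namespace LinearMap.BilinForm

variable {K V : Type*} [Field K] [AddCommGroup V] [Module K V] {f : LinearMap.BilinForm K V}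

theorem exists_apply_eq_one_of_ne_zero (hf : f ≠ 0) : ∃ x y, f x y = 1 := by
  obtain ⟨x, y, hxy⟩ : ∃ x y, f x y ≠ 0 := by
    by_contra! h
    exact hf (ext h)
  exact ⟨x, (f x y)⁻¹ • y, by simp [hxy]⟩

theorem exists_isSymm_le_ker_apply_self_ne_zero {W : Submodule K V} (hW : W ≠ ⊤) :
    ∃ q : LinearMap.BilinForm K V, q.IsSymm ∧ W ≤ ker q ∧ ∃ x, q x x ≠ 0 := by
  obtain ⟨φ, hφ, hWφ⟩ := W.exists_le_ker_of_lt_top hW.lt_top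
  obtain ⟨x, hx⟩ := DFunLike.ne_iff.mp hφ
  refine ⟨(LinearMap.mul K K).compl₁₂ φ φ, ⟨fun y z => mul_comm _ _⟩, fun w hw => ?_,
    x, by simpa using hx⟩
  ext
  simp [mem_ker.mp (hWφ hw)]

section HyperbolicPair

variable {x y : V}

theorem IsAlt.apply_swap_eq_neg_one (hf : f.IsAlt) (hxy : f x y = 1) : f y x = -1 := by
  rw [← hf.neg_eq, hxy]

theorem IsAlt.finrank_ker_inf_ker_add_two [FiniteDimensional K V] (hf : f.IsAlt)
    (hxy : f x y = 1) : finrank K ↥(ker (f x) ⊓ ker (f y)) + 2 = finrank K V := by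
  have hsurj : Function.Surjective ((f x).prod (f y)) := fun ⟨s, t⟩ =>
    ⟨s • y - t • x, by simp [hxy, hf.apply_swap_eq_neg_one hxy, hf.self_eq_zero]⟩
  have := finrank_range_add_finrank_ker ((f x).prod (f y))
  rwa [range_eq_top.mpr hsurj, finrank_top, finrank_prod, finrank_self, ker_prod,
    add_comm] at this

theorem IsAlt.ker_le_ker_inf_ker (hf : f.IsAlt) : ker f ≤ ker (f x) ⊓ ker (f y) := by
  intro w hw
  rw [mem_ker] at hw
  simp [hf.isRefl w, hw]

theorem IsAlt.ker_restrict_ker_inf_ker (hf : f.IsAlt) (hxy : f x y = 1) :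
    ker (f.restrict (ker (f x) ⊓ ker (f y))) =
      (ker f).comap (ker (f x) ⊓ ker (f y)).subtype := by
  ext ⟨w, hw⟩
  simp only [Submodule.mem_inf, mem_ker] at hw
  simp only [mem_ker, Submodule.mem_comap, Submodule.subtype_apply]
  refine ⟨fun h => LinearMap.ext fun v => ?_, fun h => by ext; simp [h]⟩
  -- `v` differs from a vector orthogonal to `x` and `y` by a combination of `x` and `y`
  have hv : v + f y v • x - f x v • y ∈ ker (f x) ⊓ ker (f y) := by
    simp [hxy, hf.apply_swap_eq_neg_one hxy, hf.self_eq_zero]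
  simpa [hf.isRefl x w hw.1, hf.isRefl y w hw.2] using congr($h ⟨_, hv⟩)

theorem IsAlt.finrank_range_restrict_add_two [FiniteDimensional K V] (hf : f.IsAlt)
    (hxy : f x y = 1) :
    finrank K (range (f.restrict (ker (f x) ⊓ ker (f y)))) + 2 = finrank K (range f) := by
  have hker :=
    (Submodule.comapSubtypeEquivOfLe (hf.ker_le_ker_inf_ker (x := x) (y := y))).finrank_eq
  rw [← hf.ker_restrict_ker_inf_ker hxy] at hker
  have := finrank_range_add_finrank_ker f
  have := finrank_range_add_finrank_ker (f.restrict (ker (f x) ⊓ ker (f y)))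
  have := hf.finrank_ker_inf_ker_add_two hxy
  omega

end HyperbolicPair

theorem IsAlt.even_finrank_range [FiniteDimensional K V] (hf : f.IsAlt) :
    Even (finrank K (range f)) := by
  obtain ⟨n, hn⟩ : ∃ n, finrank K V = n := ⟨_, rfl⟩
  induction n using Nat.strong_induction_on generalizing V with
  | _ n ih =>
    by_cases hf0 : f = 0
    · subst hf0
      rw [LinearMap.range_zero, finrank_bot]
      exact ⟨0, rfl⟩
    obtain ⟨x, y, hxy⟩ := exists_apply_eq_one_of_ne_zero hf0
    rw [← hf.finrank_range_restrict_add_two hxy]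
    refine (ih _ ?_ (f := f.restrict (ker (f x) ⊓ ker (f y))) (fun w => hf w) rfl).add
      even_two
    have := hf.finrank_ker_inf_ker_add_two hxy
    omega

section CharTwo

variable [CharP K 2]

theorem IsSymm.isAlt_of_span_eq_top_s15 (hf : f.IsSymm) {S : Set V}
    (hS : Submodule.span K S = ⊤) (hS0 : ∀ s ∈ S, f s s = 0) : f.IsAlt := by
  intro x
  induction (hS ▸ Submodule.mem_top : x ∈ Submodule.span K S)
    using Submodule.span_induction with
  | mem s hs => exact hS0 s hs
  | zero => simp
  | add a b _ _ ha hb =>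
    simp [ha, hb, hf.eq b a, CharTwo.add_self_eq_zero]
  | smul c a _ ha => simp [ha]

theorem IsSymm.isAlt_of_sup_span_eq_top (hf : f.IsSymm) {U : Submodule K V} (hU : U ≤ ker f)
    {ι : Type*} {b : ι → V} (hb : U ⊔ Submodule.span K (Set.range b) = ⊤)
    (hb0 : ∀ i, f (b i) (b i) = 0) : f.IsAlt := by
  refine hf.isAlt_of_span_eq_top_s15 (S := U ∪ Set.range b) ?_ ?_
  · rwa [Submodule.span_union, Submodule.span_eq]
  · rintro s (hs | ⟨i, rfl⟩)
    · simp [mem_ker.mp (hU hs)]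
    · exact hb0 i

variable [FiniteDimensional K V]

theorem exists_mem_apply_self_eq {N : Submodule K (LinearMap.BilinForm K V)} {U : Submodule K V}
    (hsymm : ∀ f ∈ N, f.IsSymm) (hnalt : ∀ f ∈ N, f.IsAlt → f = 0) (hU : ∀ f ∈ N, U ≤ ker f)
    (hdim : finrank K U + finrank K N = finrank K V) {h : LinearMap.BilinForm K V}
    (hh : h.IsSymm) (hhU : U ≤ ker h) : ∃ g ∈ N, ∀ x, g x x = h x x := by
  obtain ⟨b, hb⟩ := U.exists_sup_span_range_eq_top hdim
  have hdiag {f₁ f₂ : LinearMap.BilinForm K V} (hf₁ : f₁.IsSymm) (hf₂ : f₂.IsSymm)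
      (hf₁U : U ≤ ker f₁) (hf₂U : U ≤ ker f₂) (heq : ∀ i, f₁ (b i) (b i) = f₂ (b i) (b i)) :
      (f₁ - f₂).IsAlt :=
    (hf₁.sub hf₂).isAlt_of_sup_span_eq_top
      (fun u hu => by simp [mem_ker.mp (hf₁U hu), mem_ker.mp (hf₂U hu)]) hb
      fun i => sub_eq_zero.mpr (heq i)
  let diag : N →ₗ[K] (Fin (finrank K N) → K) :=
    { toFun := fun g i => (g : LinearMap.BilinForm K V) (b i) (b i)
      map_add' := fun _ _ => rfl
      map_smul' := fun _ _ => rfl }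
  have hinj : Function.Injective diag := by
    intro g₁ g₂ heq
    have hmem : (g₁ - g₂ : LinearMap.BilinForm K V) ∈ N :=
      Submodule.sub_mem (M := LinearMap.BilinForm K V) N g₁.2 g₂.2
    have halt := hdiag (hsymm _ g₁.2) (hsymm _ g₂.2) (hU _ g₁.2) (hU _ g₂.2) (congrFun heq)
    exact Subtype.ext (sub_eq_zero.mp (hnalt _ hmem halt))
  -- not found by instance search for submodules of `V →ₗ[K] V →ₗ[K] K`
  let _ : AddCommGroup N := Submodule.addCommGroup (M := LinearMap.BilinForm K V) N
  obtain ⟨g, hg⟩ := (injective_iff_surjective_of_finrank_eq_finrank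
    (finrank_fin_fun K).symm).mp hinj fun i => h (b i) (b i)
  refine ⟨g, g.2, fun x => sub_eq_zero.mp ?_⟩
  simpa using hdiag (hsymm _ g.2) hh (hU _ g.2) hhU (congrFun hg) x

theorem eq_of_mem_inf_of_sup_ne_top {M N N₁ : Submodule K (LinearMap.BilinForm K V)}
    {U U₁ : Submodule K V} {v : V} (hsymm : ∀ f ∈ M, f.IsSymm)
    (hMalt : ∀ f ∈ M, f.IsAlt → f v = 0 → f = 0) (hNM : N ≤ M) (hN₁M : N₁ ≤ M)
    (hU : ∀ f ∈ N, f ≠ 0 → ker f = U) (hU₁ : ∀ f ∈ N₁, f ≠ 0 → ker f = U₁)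
    (hdimN : finrank K U + finrank K N = finrank K V)
    (hdimN₁ : finrank K U₁ + finrank K N₁ = finrank K V)
    (hv : v ∈ U ⊓ U₁) (hsup : U ⊔ U₁ ≠ ⊤) : N = N₁ := by
  have hUker (f) (hf : f ∈ N) : U ≤ ker f := le_ker_of_ne_zero_imp (hU f hf)
  have hU₁ker (f) (hf : f ∈ N₁) : U₁ ≤ ker f := le_ker_of_ne_zero_imp (hU₁ f hf)
  have hreal {h : LinearMap.BilinForm K V} (hh : h.IsSymm) (hhU : U ≤ ker h) :
      ∃ g ∈ N, ∀ x, g x x = h x x :=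
    exists_mem_apply_self_eq (fun f hf => hsymm f (hNM hf))
      (fun f hf halt => hMalt f (hNM hf) halt (mem_ker.mp (hUker f hf hv.1))) hUker hdimN hh hhU
  have hreal₁ {h : LinearMap.BilinForm K V} (hh : h.IsSymm) (hhU : U₁ ≤ ker h) :
      ∃ g ∈ N₁, ∀ x, g x x = h x x :=
    exists_mem_apply_self_eq (fun f hf => hsymm f (hN₁M hf))
      (fun f hf halt => hMalt f (hN₁M hf) halt (mem_ker.mp (hU₁ker f hf hv.2))) hU₁ker hdimN₁
      hh hhU
  have heq {g g₁} (hg : g ∈ N) (hg₁ : g₁ ∈ N₁) (hdiag : ∀ x, g x x = g₁ x x) : g = g₁ :=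
    sub_eq_zero.mp <| hMalt _
      (Submodule.sub_mem (M := LinearMap.BilinForm K V) M (hNM hg) (hN₁M hg₁))
      (fun x => by simp [hdiag])
      (by simp [mem_ker.mp (hUker g hg hv.1), mem_ker.mp (hU₁ker g₁ hg₁ hv.2)])
  obtain ⟨q, hq, hqU, x, hx⟩ := exists_isSymm_le_ker_apply_self_ne_zero hsup
  obtain ⟨g, hgN, hg⟩ := hreal hq (le_sup_left.trans hqU)
  obtain ⟨g₁, hg₁N₁, hg₁⟩ := hreal₁ hq (le_sup_right.trans hqU)
  have hgg₁ : g = g₁ := heq hgN hg₁N₁ fun y => (hg y).trans (hg₁ y).symm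
  have hg0 : g ≠ 0 := fun h => hx (by simp [← hg x, h])
  have hUU₁ : U = U₁ := by
    rw [← hU g hgN hg0, hgg₁, hU₁ g₁ hg₁N₁ (hgg₁ ▸ hg0)]
  have hN₁N : N₁ ≤ N := fun h hh => by
    obtain ⟨g, hgN, hg⟩ := hreal (hsymm h (hN₁M hh)) (hUU₁ ▸ hU₁ker h hh)
    exact heq hgN hh hg ▸ hgN
  have hdim : finrank K N₁ = finrank K N := by
    rw [hUU₁] at hdimN
    omega
  have hN₁eq : N₁ = N :=
    Submodule.eq_of_le_of_finrank_eq (V := LinearMap.BilinForm K V) hN₁N hdim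
  exact hN₁eq.symm

end CharTwo

end LinearMap.BilinForm

theorem common_radicals_complementary_general
    {K V : Type*} [Field K] [CharP K 2]
    [AddCommGroup V] [Module K V] [FiniteDimensional K V] (r : ℕ)
    (hrodd : Odd r)
    (hdim : Module.finrank K V = 2 * r)
    (M : Submodule K (V →ₗ[K] V →ₗ[K] K))
    (hsymm : ∀ f ∈ M, LinearMap.BilinForm.IsSymm f)
    (hrank : ∀ f ∈ M, f ≠ 0 → Module.finrank K (LinearMap.range f) = r ∨
      Module.finrank K (LinearMap.range f) = 2 * r)
    (N N₁ : Submodule K (V →ₗ[K] V →ₗ[K] K))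
    (hNM : N ≤ M) (hN₁M : N₁ ≤ M) (hne : N ≠ N₁)
    (hdimN : Module.finrank K N = r) (hdimN₁ : Module.finrank K N₁ = r)
    (hrkN : ∀ f ∈ N, f ≠ 0 → Module.finrank K (LinearMap.range f) = r)
    (hrkN₁ : ∀ f ∈ N₁, f ≠ 0 → Module.finrank K (LinearMap.range f) = r)
    (U U₁ : Submodule K V)
    (hU : ∀ f ∈ N, f ≠ 0 → LinearMap.ker f = U)
    (hU₁ : ∀ f ∈ N₁, f ≠ 0 → LinearMap.ker f = U₁) :
    U ⊓ U₁ = ⊥ ∧ U ⊔ U₁ = ⊤ := by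
  have hr : 0 < r := hrodd.pos
  have hUr := finrank_add_eq_of_forall_ker_eq (by rintro rfl; simp at hdimN; omega) hrkN hU
  have hU₁r := finrank_add_eq_of_forall_ker_eq (by rintro rfl; simp at hdimN₁; omega) hrkN₁ hU₁
  have hMalt : ∀ f ∈ M, LinearMap.BilinForm.IsAlt f → ∀ v ≠ 0, f v = 0 → f = 0 := by
    intro f hf halt v hv hfv
    by_contra hf0
    rcases hrank f hf hf0 with h | h
    · exact Nat.not_even_iff_odd.mpr hrodd (h ▸ halt.even_finrank_range)
    · have hker := Submodule.one_le_finrank_iff.mpr ((ker f).ne_bot_iff.mpr ⟨v, hfv, hv⟩)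
      have := finrank_range_add_finrank_ker f
      omega
  have hdisj : Disjoint U U₁ := by
    rw [disjoint_iff]
    by_contra hbot
    obtain ⟨v, hv, hv0⟩ := Submodule.ne_bot_iff _ |>.mp hbot
    refine hne (LinearMap.BilinForm.eq_of_mem_inf_of_sup_ne_top hsymm
      (fun f hf halt => hMalt f hf halt v hv0) hNM hN₁M hU hU₁ (by rw [hdimN, hUr])
      (by rw [hdimN₁, hU₁r]) hv ?_)
    intro htop
    have := Submodule.finrank_sup_add_finrank_inf_eq U U₁
    rw [htop, finrank_top] at this
    have := Submodule.one_le_finrank_iff.mpr hbot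
    omega
  exact ⟨disjoint_iff.mp hdisj, Submodule.eq_top_of_disjoint U U₁ (by omega) hdisj⟩

/-- Under the hypotheses of the previous statement, if U and U₁ are the common
radicals of the nonzero elements of N and N₁ respectively, then U ∩ U₁ = 0 and
V = U ⊕ U₁. -/
theorem common_radicals_complementary
    {K V : Type*} [Field K] [CharP K 2]
    [AddCommGroup V] [Module K V] [FiniteDimensional K V] (r : ℕ)
    (hcard : (r + 1 : Cardinal) ≤ Cardinal.mk K) (hrodd : Odd r)
    (hdim : Module.finrank K V = 2 * r)
    (M : Submodule K (V →ₗ[K] V →ₗ[K] K))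
    (hsymm : ∀ f ∈ M, LinearMap.BilinForm.IsSymm f)
    (hdimM : Module.finrank K M = 3 * r)
    (hrank : ∀ f ∈ M, f ≠ 0 → Module.finrank K (LinearMap.range f) = r ∨
      Module.finrank K (LinearMap.range f) = 2 * r)
    (N N₁ : Submodule K (V →ₗ[K] V →ₗ[K] K))
    (hNM : N ≤ M) (hN₁M : N₁ ≤ M) (hne : N ≠ N₁)
    (hdimN : Module.finrank K N = r) (hdimN₁ : Module.finrank K N₁ = r)
    (hrkN : ∀ f ∈ N, f ≠ 0 → Module.finrank K (LinearMap.range f) = r)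
    (hrkN₁ : ∀ f ∈ N₁, f ≠ 0 → Module.finrank K (LinearMap.range f) = r)
    (U U₁ : Submodule K V)
    (hU : ∀ f ∈ N, f ≠ 0 → LinearMap.ker f = U)
    (hU₁ : ∀ f ∈ N₁, f ≠ 0 → LinearMap.ker f = U₁) :
    U ⊓ U₁ = ⊥ ∧ U ⊔ U₁ = ⊤ :=
  common_radicals_complementary_general r hrodd hdim M hsymm hrank N N₁ hNM hN₁M hne hdimN hdimN₁
    hrkN hrkN₁ U U₁ hU hU₁
end

section
/- Let char K = 2, r odd, n = 2r, V of dimension n, and let g, g₁ be symmetric bilinear forms on V with V = U ⊕ U₁, where U = rad g ≠ rad g₁ = U₁ are r-dimensional, and g, g₁ each have rank r. Then g + g₁ has rank n = 2r and is not alternating. -/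
/-!
Because `g` vanishes on `U` and `g₁` on `U₁`, the form `g + g₁` pairs `U` and `U₁` trivially and
restricts to `g` on `U₁` and to `g₁` on `U`. A symmetric form is nondegenerate on any complement
of its radical, so `g + g₁` is nondegenerate. If it were alternating, `g` restricted to `U₁` would
be a nondegenerate alternating form in odd dimension `r`, which is impossible: splitting off
hyperbolic planes shows that such forms only exist in even dimension, in every characteristic.
-/

open Module Submodule LinearMap LinearMap.BilinForm

namespace LinearMap.BilinForm

section Alternating

variable {K V : Type*} [Field K] [AddCommGroup V] [Module K V]
  {B : LinearMap.BilinForm K V} {x y : V}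

lemma linearIndependent_pair_of_isAlt (hB : B.IsAlt) (hxy : B x y ≠ 0) :
    LinearIndependent K ![x, y] := by
  have hx : x ≠ 0 := by rintro rfl; simp at hxy
  refine (LinearIndependent.pair_iff' hx).mpr fun a hay => hxy ?_
  rw [← hay, map_smul, hB.self_eq_zero, smul_zero]

lemma finrank_span_pair_of_isAlt (hB : B.IsAlt) (hxy : B x y ≠ 0) :
    finrank K (span K {x, y}) = 2 := by
  have := finrank_span_eq_card (linearIndependent_pair_of_isAlt hB hxy)
  rwa [Matrix.range_cons_cons_empty, Fintype.card_fin] at this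

lemma restrict_span_pair_nondegenerate (hB : B.IsAlt) (hxy : B x y ≠ 0) :
    (B.restrict (span K {x, y})).Nondegenerate := by
  have hyx : B y x ≠ 0 := by rwa [← hB.neg_eq, neg_ne_zero]
  refine (IsRefl.nondegenerate_iff_separatingLeft (B := B.restrict _)
    fun a b => hB.isRefl a b).mpr ?_
  rintro ⟨p, hp⟩ hp₀
  obtain ⟨a, b, rfl⟩ := mem_span_pair.mp hp
  have hbx := hp₀ ⟨x, subset_span (by simp)⟩
  have hay := hp₀ ⟨y, subset_span (by simp)⟩
  simp only [restrict_apply, domRestrict_apply, map_add, map_smul, LinearMap.add_apply,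
    LinearMap.smul_apply, smul_eq_mul, hB.self_eq_zero, mul_zero, zero_add, add_zero,
    mul_eq_zero, hxy, hyx, or_false] at hbx hay
  simp [hay, hbx]

theorem even_finrank_of_isAlt_of_nondegenerate [FiniteDimensional K V] (hB : B.IsAlt)
    (hnd : B.Nondegenerate) : Even (finrank K V) := by
  induction hn : finrank K V using Nat.strong_induction_on generalizing V with
  | _ n ih =>
  rcases n.eq_zero_or_pos with rfl | hpos
  · exact Even.zero
  have : Nontrivial V := nontrivial_of_finrank_pos (hn ▸ hpos)
  obtain ⟨x, hx⟩ := exists_ne (0 : V)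
  obtain ⟨y, hxy⟩ : ∃ y, B x y ≠ 0 := by
    by_contra! h
    exact hx (hnd.1 x h)
  have hP := finrank_span_pair_of_isAlt hB hxy
  have hW : (B.restrict (B.orthogonal (span K {x, y}))).Nondegenerate := by
    refine B.nondegenerate_restrict_of_disjoint_orthogonal hB.isRefl ?_
    rw [orthogonal_orthogonal hnd hB.isRefl]
    exact (isCompl_orthogonal_of_restrict_nondegenerate hB.isRefl
      (restrict_span_pair_nondegenerate hB hxy)).disjoint.symm
  have h2 : 2 ≤ n := hn ▸ hP ▸ finrank_le _
  obtain ⟨k, hk⟩ := ih (n - 2) (by omega) (B := B.restrict _) (fun w => hB w) hW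
    (by rw [finrank_orthogonal hnd, hP, hn])
  exact ⟨k + 1, by omega⟩

end Alternating

variable {R M : Type*} [CommRing R] [AddCommGroup M] [Module R M]
  {B B' : LinearMap.BilinForm R M}

lemma eq_zero_of_add_mem_ker_add (hB : B.IsSymm) (hB' : B'.IsSymm)
    (hcompl : IsCompl (ker B) (ker B')) {u u' : M} (hu : u ∈ ker B) (hu' : u' ∈ ker B')
    (h : u + u' ∈ ker (B + B')) : u' = 0 := by
  have hnd := (isSymm_iff.mp hB).nondegenerate_restrict_of_isCompl_ker hcompl.symm
  suffices (⟨u', hu'⟩ : ker B') = 0 by simpa using this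
  refine hnd.1 _ fun ⟨w, hw⟩ => ?_
  rw [mem_ker] at hu hu' hw h
  have hB'uw : B' u w = 0 := hB'.isRefl _ _ (by simp [hw])
  show B u' w = 0
  simpa [hu, hu', hB'uw] using congr($h w)

theorem ker_add_eq_bot_of_isCompl_ker (hB : B.IsSymm) (hB' : B'.IsSymm)
    (hcompl : IsCompl (ker B) (ker B')) : ker (B + B') = ⊥ := by
  refine eq_bot_iff.mpr fun v hv => ?_
  obtain ⟨u, hu, u', hu', rfl⟩ := mem_sup.mp (hcompl.sup_eq_top ▸ mem_top (x := v))
  have hu'0 := eq_zero_of_add_mem_ker_add hB hB' hcompl hu hu' hv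
  have hu0 := eq_zero_of_add_mem_ker_add hB' hB hcompl.symm hu' hu
    (by rwa [add_comm u', add_comm B'])
  simp [hu0, hu'0]

lemma isAlt_restrict_ker_of_isAlt_add (h : (B + B').IsAlt) : (B.restrict (ker B')).IsAlt :=
  fun ⟨w, hw⟩ => by simpa [mem_ker.mp hw] using h w

end LinearMap.BilinForm

theorem sum_has_full_rank_not_alternating_general
    {K V : Type*} [Field K]
    [AddCommGroup V] [Module K V] [FiniteDimensional K V] (r : ℕ)
    (hrodd : Odd r) (hdim : Module.finrank K V = 2 * r)
    (g g₁ : V →ₗ[K] V →ₗ[K] K)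
    (hg : LinearMap.BilinForm.IsSymm g) (hg₁ : LinearMap.BilinForm.IsSymm g₁)
    (U U₁ : Submodule K V)
    (hU : LinearMap.ker g = U) (hU₁ : LinearMap.ker g₁ = U₁)
    (hdimU₁ : Module.finrank K U₁ = r)
    (hcompl : IsCompl U U₁) :
    Module.finrank K (LinearMap.range (g + g₁)) = 2 * r ∧
      ¬ LinearMap.BilinForm.IsAlt (g + g₁) := by
  subst hU hU₁
  refine ⟨?_, fun halt => ?_⟩
  · rw [finrank_range_of_inj (ker_eq_bot.mp (ker_add_eq_bot_of_isCompl_ker hg hg₁ hcompl)), hdim]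
  · have heven := even_finrank_of_isAlt_of_nondegenerate (isAlt_restrict_ker_of_isAlt_add halt)
      ((isSymm_iff.mp hg).nondegenerate_restrict_of_isCompl_ker hcompl.symm)
    rw [hdimU₁] at heven
    exact Nat.not_even_iff_odd.mpr hrodd heven

/-- Char 2, r odd, n = 2r. If g, g₁ are symmetric bilinear forms of rank r with
distinct r-dimensional radicals U = rad g, U₁ = rad g₁ satisfying V = U ⊕ U₁,
then g + g₁ has rank n = 2r and is not alternating. -/
theorem sum_has_full_rank_not_alternating
    {K V : Type*} [Field K] [CharP K 2]
    [AddCommGroup V] [Module K V] [FiniteDimensional K V] (r : ℕ)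
    (hrodd : Odd r) (hdim : Module.finrank K V = 2 * r)
    (g g₁ : V →ₗ[K] V →ₗ[K] K)
    (hg : LinearMap.BilinForm.IsSymm g) (hg₁ : LinearMap.BilinForm.IsSymm g₁)
    (U U₁ : Submodule K V)
    (hU : LinearMap.ker g = U) (hU₁ : LinearMap.ker g₁ = U₁) (hUne : U ≠ U₁)
    (hdimU : Module.finrank K U = r) (hdimU₁ : Module.finrank K U₁ = r)
    (hcompl : IsCompl U U₁)
    (hrkg : Module.finrank K (LinearMap.range g) = r)
    (hrkg₁ : Module.finrank K (LinearMap.range g₁) = r) :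
    Module.finrank K (LinearMap.range (g + g₁)) = 2 * r ∧
      ¬ LinearMap.BilinForm.IsAlt (g + g₁) :=
  sum_has_full_rank_not_alternating_general r hrodd hdim g g₁ hg hg₁ U U₁ hU hU₁ hdimU₁ hcompl
end

section
/- Let V be an n-dimensional vector space over a field K and let 2 ≤ 2r ≤ n. Then Symm(V) contains a subspace of dimension n − 2r + 1 in which every nonzero element has rank exactly 2r. -/
/-!
Split a basis of `V` as `r + (k + r)` with `k = n - 2r`, and to a coefficient vector
`c = (c₀, …, c_k)` attach the symmetric block matrix `[[0, Bᵀ], [B, 0]]`, where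
`B : K^r → K^(k+r)` is multiplication by `c₀ + c₁X + ⋯ + c_kXᵏ` on polynomials of degree
`< r`. Since `K[X]` is a domain, `B` is injective for `c ≠ 0`, so the block matrix has rank
exactly `2r`; in particular it vanishes only for `c = 0`, and these forms make up a subspace of
dimension `k + 1`.
-/

open Module

theorem Submodule.finrank_prod {K M M' : Type*} [DivisionRing K] [AddCommGroup M] [Module K M]
    [AddCommGroup M'] [Module K M'] [FiniteDimensional K M] [FiniteDimensional K M']
    (p : Submodule K M) (q : Submodule K M') :
    finrank K (p.prod q) = finrank K p + finrank K q := by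
  rw [← p.range_subtype, ← q.range_subtype, ← LinearMap.range_prodMap,
    LinearMap.finrank_range_of_inj (p.injective_subtype.prodMap q.injective_subtype),
    Module.finrank_prod, p.range_subtype, q.range_subtype]

theorem exists_ne_zero_forall_lt_eq_zero {ι M : Type*} [LinearOrder ι] [WellFoundedLT ι]
    [Zero M] {f : ι → M} (hf : f ≠ 0) : ∃ i, f i ≠ 0 ∧ ∀ j < i, f j = 0 := by
  obtain ⟨i, hi⟩ := exists_minimal_of_wellFoundedLT (fun i => f i ≠ 0) (Function.ne_iff.mp hf)
  exact ⟨i, hi.prop, fun j hj => not_not.mp fun hj' => hi.not_lt hj' hj⟩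

namespace Matrix

section CommSemiring

variable {R m n : Type*} [CommSemiring R]

def symmDilation : Matrix m n R →ₗ[R] Matrix (n ⊕ m) (n ⊕ m) R where
  toFun B := fromBlocks 0 Bᵀ B 0
  map_add' B C := by simp [fromBlocks_add]
  map_smul' a B := by simp [fromBlocks_smul]

theorem symmDilation_apply (B : Matrix m n R) : symmDilation B = fromBlocks 0 Bᵀ B 0 :=
  rfl

theorem isSymm_symmDilation (B : Matrix m n R) : (symmDilation B).IsSymm :=
  IsSymm.fromBlocks isSymm_zero rfl isSymm_zero

end CommSemiring

variable {K : Type*} [Field K]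

section BlockRank

variable {m m' n n' : Type*} [Fintype m] [Fintype m'] [Fintype n] [Fintype n']

theorem rank_fromBlocks_zero₁₂_zero₂₁ (A : Matrix m n K) (D : Matrix m' n' K) :
    (fromBlocks A 0 0 D).rank = A.rank + D.rank := by
  classical
  have h : (fromBlocks A 0 0 D).mulVecLin =
      (LinearEquiv.sumArrowLequivProdArrow m m' K K).symm.toLinearMap ∘ₗ
        A.mulVecLin.prodMap D.mulVecLin ∘ₗ
          (LinearEquiv.sumArrowLequivProdArrow n n' K K).toLinearMap := by
    refine LinearMap.ext fun v => funext fun i => ?_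
    rcases i with i | i <;>
      simp only [mulVecLin_apply, fromBlocks_mulVec, zero_mulVec, add_zero, zero_add,
        Sum.elim_inl, Sum.elim_inr, LinearMap.coe_comp, LinearEquiv.coe_coe, Function.comp_apply,
        LinearMap.prodMap_apply, LinearEquiv.sumArrowLequivProdArrow_symm_apply_inl,
        LinearEquiv.sumArrowLequivProdArrow_symm_apply_inr] <;> rfl
  rw [rank, h, LinearMap.range_comp, LinearMap.range_comp_of_range_eq_top _ (LinearEquiv.range _),
    LinearEquiv.finrank_map_eq, LinearMap.range_prodMap, Submodule.finrank_prod]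
  rfl

theorem rank_fromBlocks_zero₁₁_zero₂₂ (B : Matrix m n' K) (C : Matrix m' n K) :
    (fromBlocks 0 B C 0).rank = B.rank + C.rank := by
  have : fromBlocks 0 B C 0 =
      (fromBlocks B 0 0 C).submatrix (Equiv.refl _) (Equiv.sumComm n n') := by
    ext (i | i) (j | j) <;> rfl
  rw [this, rank_submatrix, rank_fromBlocks_zero₁₂_zero₂₁]

theorem rank_symmDilation (B : Matrix m n K) : (symmDilation B).rank = 2 * B.rank := by
  rw [symmDilation_apply, rank_fromBlocks_zero₁₁_zero₂₂, rank_transpose, two_mul]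

end BlockRank

/-- The matrix of multiplication by `∑ cᵢ Xⁱ`, from polynomials of degree `< p` to polynomials
of degree `< k + p`, in the monomial bases. -/
def convMatrix (k p : ℕ) : (Fin (k + 1) → K) →ₗ[K] Matrix (Fin (k + p)) (Fin p) K where
  toFun c := of fun i j => if h : (j : ℕ) ≤ i ∧ (i : ℕ) - j ≤ k then c ⟨i - j, by omega⟩ else 0
  map_add' c d := by ext; simp only [of_apply, add_apply, Pi.add_apply]; split_ifs <;> simp
  map_smul' a c := by ext; simp only [of_apply, smul_apply, Pi.smul_apply]; split_ifs <;> simp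

theorem convMatrix_apply {k p : ℕ} (c : Fin (k + 1) → K) (i : Fin (k + p)) (j : Fin p) :
    convMatrix k p c i j =
      if h : (j : ℕ) ≤ i ∧ (i : ℕ) - j ≤ k then c ⟨i - j, by omega⟩ else 0 :=
  rfl

/-- The lowest coefficient of a product is the product of the lowest coefficients. -/
theorem convMatrix_mulVec_ne_zero {k p : ℕ} {c : Fin (k + 1) → K} (hc : c ≠ 0)
    {v : Fin p → K} (hv : v ≠ 0) : convMatrix k p c *ᵥ v ≠ 0 := by
  obtain ⟨a, hca, hc_lt⟩ := exists_ne_zero_forall_lt_eq_zero hc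
  obtain ⟨b, hvb, hv_lt⟩ := exists_ne_zero_forall_lt_eq_zero hv
  have hlowest : (convMatrix k p c *ᵥ v) ⟨a + b, by omega⟩ = c a * v b := by
    rw [mulVec, dotProduct, Finset.sum_eq_single b]
    · rw [convMatrix_apply, dif_pos (by dsimp only; omega)]
      simp
    · intro j _ hjb
      rcases lt_or_gt_of_ne hjb with hj | hj
      · rw [hv_lt j hj, mul_zero]
      · rw [convMatrix_apply]
        split_ifs with h
        · rw [hc_lt _ (Fin.lt_def.mpr (by dsimp only at h ⊢; omega)), zero_mul]
        · rw [zero_mul]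
    · simp
  exact fun h => mul_ne_zero hca hvb (hlowest ▸ congrFun h _)

theorem rank_convMatrix {k p : ℕ} {c : Fin (k + 1) → K} (hc : c ≠ 0) :
    (convMatrix k p c).rank = p := by
  have hinj : Function.Injective (convMatrix k p c).mulVecLin :=
    (injective_iff_map_eq_zero _).mpr fun v hv =>
      not_not.mp fun hv' => convMatrix_mulVec_ne_zero hc hv' hv
  rw [rank, LinearMap.finrank_range_of_inj hinj, finrank_fin_fun]

theorem finrank_range_toBilin {ι V : Type*} [Fintype ι] [DecidableEq ι] [AddCommGroup V]
    [Module K V] (b : Basis ι K V) (S : Matrix ι ι K) :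
    finrank K (LinearMap.range (S.toBilin b)) = S.rank := by
  have : S.toBilin b = toLin b b.dualBasis Sᵀ := by
    refine b.ext fun i => b.ext fun j => ?_
    simp [toLin_self, toBilin_apply, Finsupp.single_apply]
  rw [this, ← rank_eq_finrank_range_toLin, rank_transpose]

end Matrix

open Matrix

/-- Symm(V) contains a subspace of dimension n − 2r + 1 in which every nonzero
element has rank exactly 2r, whenever 2 ≤ 2r ≤ n. -/
theorem exists_constant_even_rank_subspace {K V : Type*} [Field K]
    [AddCommGroup V] [Module K V] [FiniteDimensional K V] (n r : ℕ)
    (hdim : Module.finrank K V = n) (hr : 2 ≤ 2 * r) (hrn : 2 * r ≤ n) :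
    ∃ M : Submodule K (V →ₗ[K] V →ₗ[K] K),
      (∀ f ∈ M, LinearMap.BilinForm.IsSymm f) ∧
      Module.finrank K M = n - 2 * r + 1 ∧
      ∀ f ∈ M, f ≠ 0 → Module.finrank K (LinearMap.range f) = 2 * r := by
  set k := n - 2 * r
  have hcard : Fintype.card (Fin r ⊕ Fin (k + r)) = finrank K V := by
    simp only [Fintype.card_sum, Fintype.card_fin]; omega
  let b := (Module.finBasis K V).reindex (Fintype.equivFinOfCardEq hcard).symm
  let Φ := (toBilin b).toLinearMap ∘ₗ symmDilation ∘ₗ convMatrix k r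
  have hrank : ∀ c ≠ 0, finrank K (LinearMap.range (Φ c)) = 2 * r := fun c hc => by
    simp [Φ, finrank_range_toBilin, rank_symmDilation, rank_convMatrix hc]
  have hinj : Function.Injective Φ := (injective_iff_map_eq_zero Φ).mpr fun c hc => by
    by_contra hne
    have := hrank c hne
    rw [hc, LinearMap.range_zero, finrank_bot] at this
    omega
  refine ⟨LinearMap.range Φ, ?_, ?_, ?_⟩
  · rintro _ ⟨c, rfl⟩
    exact (isSymm_toBilin_iff_isSymm b).mpr (isSymm_symmDilation _)
  · rw [LinearMap.finrank_range_of_inj hinj, finrank_fin_fun]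
  · rintro _ ⟨c, rfl⟩ hf
    exact hrank c fun hc => hf (hc ▸ map_zero Φ)
end
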